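/- Let 𝓜¹ be the MAPK cascade network on the 22 species E_1, F_1, F_2, F_3, Z, Z_P, Y, Y_P, Y_PP, X, X_P, X_PP, E_1Z, F_1Z_P, Z_PY, Z_PY_P, F_2Y_PP, F_2Y_P, Y_PPX, Y_PPX_P, F_3X_PP, F_3X_P, with the 30 reactions E_1+Z⇌E_1Z, E_1Z→E_1+Z_P, F_1+Z_P⇌F_1Z_P, F_1Z_P→F_1+Z, Z_P+Y⇌Z_PY, Z_PY→Z_P+Y_P, Z_P+Y_P⇌Z_PY_P, Z_PY_P→Z_P+Y_PP, F_2+Y_PP⇌F_2Y_PP, F_2Y_PP→F_2+Y_P, F_2+Y_P⇌F_2Y_P, F_2Y_P→F_2+Y, Y_PP+X⇌Y_PPX, Y_PPX→Y_PP+X_P, Y_PP+X_P⇌Y_PPX_P, Y_PPX_P→Y_PP+X_PP, F_3+X_PP⇌F_3X_PP, F_3X_PP→F_3+X_P, F_3+X_P⇌F_3X_P, F_3X_P→F_3+X. Then the semi-open network 𝓜¹_{ℰ⇌0} with ℰ = {F_1, F_2, F_3, E_1, Z_P, Y_PP} open (inflow and outflow reactions added for each species of ℰ) is monostationary with mass action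 kinetics. -/

import Mathlib

/-- A reaction `y → y'` is a pair of complexes, each a vector of
nonnegative integer coefficients indexed by the species: the source and the target. -/
abbrev Reaction (S : Type) : Type := (S → ℕ) × (S → ℕ)

section General

variable {S : Type} [Fintype S] [DecidableEq S]

/-- The complex consisting of a single copy of species `s`. -/
def unitC (s : S) : S → ℕ := fun t => if t = s then 1 else 0

/-- The complex `a + b`. -/
def pairC (a b : S) : S → ℕ := fun t => (if t = a then 1 else 0) + (if t = b then 1 else 0)

/-- The mass action right-hand side `f_κ` of a network `R` with rates `κ`. -/
def massAction (R : Finset (Reaction S)) (κ : Reaction S → ℝ) (x : S → ℝ) : S → ℝ :=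
  fun s => ∑ r ∈ R, κ r * (∏ t, x t ^ r.1 t) * ((r.2 s : ℝ) - (r.1 s : ℝ))

/-- The stoichiometric subspace of a network: the span of its reaction vectors. -/
def stoichSubspace (R : Finset (Reaction S)) : Submodule ℝ (S → ℝ) :=
  Submodule.span ℝ ((fun r : Reaction S => fun s => ((r.2 s : ℝ) - (r.1 s : ℝ))) '' ↑R)

/-- A positive steady state of the mass action system `(R, κ)`. -/
def isPosSteadyState (R : Finset (Reaction S)) (κ : Reaction S → ℝ) (x : S → ℝ) : Prop :=
  (∀ s, 0 < x s) ∧ massAction R κ x = 0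

/-- A steady state is nondegenerate if the kernel of the Jacobian of the mass action
right-hand side intersects the stoichiometric subspace trivially. -/
def nondegenerate (R : Finset (Reaction S)) (κ : Reaction S → ℝ) (x : S → ℝ) : Prop :=
  ∀ v ∈ stoichSubspace R, fderiv ℝ (massAction R κ) x v = 0 → v = 0

/-- A network admits nondegenerate multistationarity if for some positive rates there are
two distinct nondegenerate positive steady states in the same stoichiometric
compatibility class. -/
def admitsNondegMultistationarity (R : Finset (Reaction S)) : Prop :=
  ∃ κ : Reaction S → ℝ, (∀ r ∈ R, 0 < κ r) ∧
    ∃ x y : S → ℝ, x ≠ y ∧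
      isPosSteadyState R κ x ∧ isPosSteadyState R κ y ∧
      nondegenerate R κ x ∧ nondegenerate R κ y ∧
      y - x ∈ stoichSubspace R

/-- The inflow reaction `0 → s`. -/
def inflow (s : S) : Reaction S := (fun _ => 0, unitC s)

/-- The outflow reaction `s → 0`. -/
def outflow (s : S) : Reaction S := (unitC s, fun _ => 0)

/-- The open network on `E`: add inflow and outflow reactions for every species of `E`. -/
def openOn (R : Finset (Reaction S)) (E : Finset S) : Finset (Reaction S) :=
  R ∪ E.image inflow ∪ E.image outflow

/-- A conservation law: a vector orthogonal to the stoichiometric subspace. -/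
def conservationLaw (R : Finset (Reaction S)) (w : S → ℝ) : Prop :=
  ∀ v ∈ stoichSubspace R, ∑ s, w s * v s = 0

/-- A set `E` of species is independently conserved in `R` if there are conservation laws
`L e` for `e ∈ E` such that `L e` has a nonzero coordinate at `e` and zero coordinate at
`e` for every other `L e'`, `e' ∈ E`. -/
def IndepConserved (R : Finset (Reaction S)) (E : Finset S) : Prop :=
  ∃ L : S → (S → ℝ), ∀ e ∈ E,
    conservationLaw R (L e) ∧ L e e ≠ 0 ∧ ∀ e' ∈ E, e' ≠ e → L e' e = 0

/-- A species is closed in `R` if neither its inflow nor its outflow is a reaction of `R`. -/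
def ClosedIn (R : Finset (Reaction S)) (s : S) : Prop :=
  inflow s ∉ R ∧ outflow s ∉ R

/-- Projection of a complex onto the coordinates outside `E`. -/
def projC (E : Finset S) (y : S → ℕ) : {s : S // s ∉ E} → ℕ := fun s => y s.val

/-- Projection of a reaction onto the coordinates outside `E`. -/
def projR (E : Finset S) (r : Reaction S) : Reaction {s : S // s ∉ E} :=
  (projC E r.1, projC E r.2)

/-- The projected network `G₋E` on the species outside `E`: project all reactions and
remove self-loops. -/
def projNet (R : Finset (Reaction S)) (E : Finset S) : Finset (Reaction {s : S // s ∉ E}) :=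
  (R.image (projR E)).filter fun r => r.1 ≠ r.2

/-- Inclusion of a reaction on the species of `E` into a reaction on all of `S`. -/
def inclR (E : Finset S) (r : Reaction {s : S // s ∈ E}) : Reaction S :=
  (fun s => if h : s ∈ E then r.1 ⟨s, h⟩ else 0,
   fun s => if h : s ∈ E then r.2 ⟨s, h⟩ else 0)

/-- `R` has at most `l` positive steady states in each stoichiometric compatibility class,
for every choice of positive reaction rates: there is no injective family of `l + 1`
positive steady states lying pairwise in the same compatibility class. -/
def atMostPosSS (R : Finset (Reaction S)) (l : ℕ) : Prop :=
  ∀ κ : Reaction S → ℝ, (∀ r ∈ R, 0 < κ r) →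
    ∀ f : Fin (l + 1) → (S → ℝ),
      (∀ j, isPosSteadyState R κ (f j)) →
      (∀ j k, f k - f j ∈ stoichSubspace R) →
      ¬ Function.Injective f

/-- Monostationarity: at most one positive steady state in each stoichiometric
compatibility class, for every choice of positive rates. -/
def monostationary (R : Finset (Reaction S)) : Prop :=
  atMostPosSS R 1

end General

/-- Species of the sequential `n`-site phosphorylation–dephosphorylation cycle:
the enzymes `E`, `F`, the substrates `S i` for `i = 0, …, n`, and the intermediates
`ES i` for `i = 0, …, n-1` and `FS i` (denoting `FS_{i+1}`) for `i = 0, …, n-1`. -/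
inductive PS (n : ℕ) : Type
  | E : PS n
  | F : PS n
  | S : Fin (n + 1) → PS n
  | ES : Fin n → PS n
  | FS : Fin n → PS n
deriving DecidableEq, Fintype

/-- The sequential `n`-site phosphorylation–dephosphorylation cycle `𝒫ⁿ`, with the `6n`
reactions `S_i + E ⇌ ES_i`, `ES_i → S_{i+1} + E` for `i = 0, …, n-1` and
`S_i + F ⇌ FS_i`, `FS_i → S_{i-1} + F` for `i = 1, …, n`. -/
def Pcycle (n : ℕ) : Finset (Reaction (PS n)) :=
  (Finset.univ.image fun i : Fin n => (pairC (PS.S i.castSucc) PS.E, unitC (PS.ES i))) ∪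
  (Finset.univ.image fun i : Fin n => (unitC (PS.ES i), pairC (PS.S i.castSucc) PS.E)) ∪
  (Finset.univ.image fun i : Fin n => (unitC (PS.ES i), pairC (PS.S i.succ) PS.E)) ∪
  (Finset.univ.image fun i : Fin n => (pairC (PS.S i.succ) PS.F, unitC (PS.FS i))) ∪
  (Finset.univ.image fun i : Fin n => (unitC (PS.FS i), pairC (PS.S i.succ) PS.F)) ∪
  (Finset.univ.image fun i : Fin n => (unitC (PS.FS i), pairC (PS.S i.castSucc) PS.F))

/-- The 22 species of the MAPK cascade network `𝓜¹`. -/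
inductive MSp : Type
  | E1 | F1 | F2 | F3 | Z | ZP | Y | YP | YPP | X | XP | XPP
  | E1Z | F1ZP | ZPY | ZPYP | F2YPP | F2YP | YPPX | YPPXP | F3XPP | F3XP
deriving DecidableEq

open MSp in
instance : Fintype MSp where
  elems := {E1, F1, F2, F3, Z, ZP, Y, YP, YPP, X, XP, XPP,
    E1Z, F1ZP, ZPY, ZPYP, F2YPP, F2YP, YPPX, YPPXP, F3XPP, F3XP}
  complete := by intro x; cases x <;> decide

open MSp in
/-- The MAPK cascade network `𝓜¹` with its 30 reactions. -/
def MAPK : Finset (Reaction MSp) :=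
  { (pairC E1 Z, unitC E1Z), (unitC E1Z, pairC E1 Z), (unitC E1Z, pairC E1 ZP),
    (pairC F1 ZP, unitC F1ZP), (unitC F1ZP, pairC F1 ZP), (unitC F1ZP, pairC F1 Z),
    (pairC ZP Y, unitC ZPY), (unitC ZPY, pairC ZP Y), (unitC ZPY, pairC ZP YP),
    (pairC ZP YP, unitC ZPYP), (unitC ZPYP, pairC ZP YP), (unitC ZPYP, pairC ZP YPP),
    (pairC F2 YPP, unitC F2YPP), (unitC F2YPP, pairC F2 YPP), (unitC F2YPP, pairC F2 YP),
    (pairC F2 YP, unitC F2YP), (unitC F2YP, pairC F2 YP), (unitC F2YP, pairC F2 Y),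
    (pairC YPP X, unitC YPPX), (unitC YPPX, pairC YPP X), (unitC YPPX, pairC YPP XP),
    (pairC YPP XP, unitC YPPXP), (unitC YPPXP, pairC YPP XP), (unitC YPPXP, pairC YPP XPP),
    (pairC F3 XPP, unitC F3XPP), (unitC F3XPP, pairC F3 XPP), (unitC F3XPP, pairC F3 XP),
    (pairC F3 XP, unitC F3XP), (unitC F3XP, pairC F3 XP), (unitC F3XP, pairC F3 X) }


namespace MKaux
open MSp

/-- The reactions of the semi-open MAPK network, as an explicit list. -/
def RL : List (Reaction MSp) :=
  [ (pairC E1 Z, unitC E1Z),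
    (unitC E1Z, pairC E1 Z),
    (unitC E1Z, pairC E1 ZP),
    (pairC F1 ZP, unitC F1ZP),
    (unitC F1ZP, pairC F1 ZP),
    (unitC F1ZP, pairC F1 Z),
    (pairC ZP Y, unitC ZPY),
    (unitC ZPY, pairC ZP Y),
    (unitC ZPY, pairC ZP YP),
    (pairC ZP YP, unitC ZPYP),
    (unitC ZPYP, pairC ZP YP),
    (unitC ZPYP, pairC ZP YPP),
    (pairC F2 YPP, unitC F2YPP),
    (unitC F2YPP, pairC F2 YPP),
    (unitC F2YPP, pairC F2 YP),
    (pairC F2 YP, unitC F2YP),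
    (unitC F2YP, pairC F2 YP),
    (unitC F2YP, pairC F2 Y),
    (pairC YPP X, unitC YPPX),
    (unitC YPPX, pairC YPP X),
    (unitC YPPX, pairC YPP XP),
    (pairC YPP XP, unitC YPPXP),
    (unitC YPPXP, pairC YPP XP),
    (unitC YPPXP, pairC YPP XPP),
    (pairC F3 XPP, unitC F3XPP),
    (unitC F3XPP, pairC F3 XPP),
    (unitC F3XPP, pairC F3 XP),
    (pairC F3 XP, unitC F3XP),
    (unitC F3XP, pairC F3 XP),
    (unitC F3XP, pairC F3 X),
    inflow F1,
    inflow F2,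
    inflow F3,
    inflow E1,
    inflow ZP,
    inflow YPP,
    outflow F1,
    outflow F2,
    outflow F3,
    outflow E1,
    outflow ZP,
    outflow YPP ]

theorem hnodup : RL.Nodup := by decide

set_option maxRecDepth 100000 in
theorem hR : openOn MAPK {MSp.F1, MSp.F2, MSp.F3, MSp.E1, MSp.ZP, MSp.YPP} = RL.toFinset := by
  have h : openOn MAPK {MSp.F1, MSp.F2, MSp.F3, MSp.E1, MSp.ZP, MSp.YPP} ⊆ RL.toFinset ∧
      RL.toFinset ⊆ openOn MAPK {MSp.F1, MSp.F2, MSp.F3, MSp.E1, MSp.ZP, MSp.YPP} := by decide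
  exact Finset.Subset.antisymm h.1 h.2

theorem prod_unit {S : Type} [Fintype S] [DecidableEq S] (x : S → ℝ) (a : S) :
    (∏ t, x t ^ unitC a t) = x a := by
  rw [Finset.prod_eq_single a] <;> simp [unitC]
  intro b hb; simp [hb]

theorem prod_pair {S : Type} [Fintype S] [DecidableEq S] (x : S → ℝ) (a b : S) (h : ¬ a = b) :
    (∏ t, x t ^ pairC a b t) = x a * x b := by
  have h2 : ∀ t, pairC a b t = unitC a t + unitC b t := fun t => rfl
  simp only [h2, pow_add, Finset.prod_mul_distrib, prod_unit]

theorem prod_zeroC {S : Type} [Fintype S] [DecidableEq S] (x : S → ℝ) :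
    (∏ t, x t ^ (fun _ => (0:ℕ)) t) = 1 := by simp

theorem sum_msp (g : MSp → ℝ) : ∑ s, g s =
    g .E1 + g .F1 + g .F2 + g .F3 + g .Z + g .ZP + g .Y + g .YP + g .YPP + g .X + g .XP + g .XPP + g .E1Z + g .F1ZP + g .ZPY + g .ZPYP + g .F2YPP + g .F2YP + g .YPPX + g .YPPXP + g .F3XPP + g .F3XP := by
  have huniv : (Finset.univ : Finset MSp) = {.E1, .F1, .F2, .F3, .Z, .ZP, .Y, .YP, .YPP, .X, .XP, .XPP, .E1Z, .F1ZP, .ZPY, .ZPYP, .F2YPP, .F2YP, .YPPX, .YPPXP, .F3XPP, .F3XP} := by decide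
  rw [huniv]
  simp [Finset.sum_insert, Finset.mem_insert]
  ring

/-- The total-X conservation law. -/
def wX : MSp → ℝ := fun s => match s with
  | .X | .XP | .XPP | .YPPX | .YPPXP | .F3XPP | .F3XP => 1
  | _ => 0

set_option maxHeartbeats 1000000 in
theorem consvX : ∀ v ∈ stoichSubspace (openOn MAPK {MSp.F1, MSp.F2, MSp.F3, MSp.E1, MSp.ZP, MSp.YPP}),
    ∑ s, wX s * v s = 0 := by
  intro v hv
  rw [stoichSubspace] at hv
  induction hv using Submodule.span_induction with
  | mem v hv =>
      obtain ⟨r, hr, rfl⟩ := hv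
      rw [Finset.mem_coe, hR, List.mem_toFinset] at hr
      rw [sum_msp]
      fin_cases hr <;>
        · simp only [wX, unitC, pairC, inflow, outflow, reduceCtorEq, reduceIte, if_true,
            if_false, Nat.cast_zero, Nat.cast_one, Nat.cast_add]
          norm_num
  | zero => simp
  | add u w _ _ h1 h2 =>
      rw [sum_msp] at h1 h2 ⊢
      simp only [Pi.add_apply]
      linarith
  | smul a u _ h1 =>
      rw [sum_msp] at h1 ⊢
      simp only [Pi.smul_apply, smul_eq_mul]
      linear_combination a * h1

theorem extract_eq (κ : Reaction MSp → ℝ) (x : MSp → ℝ)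
    (h : massAction (openOn MAPK {MSp.F1, MSp.F2, MSp.F3, MSp.E1, MSp.ZP, MSp.YPP}) κ x = 0)
    (s : MSp) :
    ((RL.map fun r => κ r * (∏ t, x t ^ r.1 t) * ((r.2 s : ℝ) - (r.1 s : ℝ))).sum) = 0 := by
  have h2 := congrFun h s
  rw [hR] at h2
  rwa [massAction, List.sum_toFinset _ hnodup] at h2

end MKaux

set_option maxHeartbeats 1000000 in
theorem MKaux.algebra_main (k1 k2 k3 k4 k5 k6 k7 k8 k9 k10 k11 k12 k13 k14 k15 k16 k17 k18 k19 k20 k21 k22 k23 k24 k25 k26 k27 k28 k29 k30 i1 i2 i3 i4 i5 i6 o1 o2 o3 o4 o5 o6 xE1 xF1 xF2 xF3 xZ xZP xY xYP xYPP xX xXP xXPP xE1Z xF1ZP xZPY xZPYP xF2YPP xF2YP xYPPX xYPPXP xF3XPP xF3XP yE1 yF1 yF2 yF3 yZ yZP yY yYP yYPP yX yXP yXPP yE1Z yF1ZP yZPY yZPYP yF2YPP yF2YP yYPPX yYPPXP yF3XPP yF3XP : ℝ)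
    (hk1 : 0 < k1) (hk2 : 0 < k2) (hk3 : 0 < k3) (hk4 : 0 < k4) (hk5 : 0 < k5) (hk6 : 0 < k6) (hk7 : 0 < k7) (hk8 : 0 < k8) (hk9 : 0 < k9) (hk10 : 0 < k10) (hk11 : 0 < k11) (hk12 : 0 < k12) (hk13 : 0 < k13) (hk14 : 0 < k14) (hk15 : 0 < k15) (hk16 : 0 < k16) (hk17 : 0 < k17) (hk18 : 0 < k18) (hk19 : 0 < k19) (hk20 : 0 < k20) (hk21 : 0 < k21) (hk22 : 0 < k22) (hk23 : 0 < k23) (hk24 : 0 < k24) (hk25 : 0 < k25) (hk26 : 0 < k26) (hk27 : 0 < k27) (hk28 : 0 < k28) (hk29 : 0 < k29) (hk30 : 0 < k30) (hi1 : 0 < i1) (hi2 : 0 < i2) (hi3 : 0 < i3) (hi4 : 0 < i4) (hi5 : 0 < i5) (hi6 : 0 < i6) (ho1 : 0 < o1) (ho2 : 0 < o2) (ho3 : 0 < o3) (ho4 : 0 < o4) (ho5 : 0 < o5) (ho6 : 0 < o6)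
    (hxE1 : 0 < xE1) (hxZP : 0 < xZP) (hxYPP : 0 < xYPP) (hxF3 : 0 < xF3)
    (ex1 : k1*xE1*xZ = (k2+k3)*xE1Z)
    (ex2 : k4*xF1*xZP = (k5+k6)*xF1ZP)
    (ex3 : k7*xZP*xY = (k8+k9)*xZPY)
    (ex4 : k10*xZP*xYP = (k11+k12)*xZPYP)
    (ex5 : k13*xF2*xYPP = (k14+k15)*xF2YPP)
    (ex6 : k16*xF2*xYP = (k17+k18)*xF2YP)
    (ex7 : k19*xYPP*xX = (k20+k21)*xYPPX)
    (ex8 : k22*xYPP*xXP = (k23+k24)*xYPPXP)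
    (ex9 : k25*xF3*xXPP = (k26+k27)*xF3XPP)
    (ex10 : k28*xF3*xXP = (k29+k30)*xF3XP)
    (ex11 : i4 + k2*xE1Z + k3*xE1Z = o4*xE1 + k1*xE1*xZ)
    (ex12 : i1 + k5*xF1ZP + k6*xF1ZP = o1*xF1 + k4*xF1*xZP)
    (ex13 : i2 + (k14+k15)*xF2YPP + (k17+k18)*xF2YP = o2*xF2 + k13*xF2*xYPP + k16*xF2*xYP)
    (ex14 : i3 + (k26+k27)*xF3XPP + (k29+k30)*xF3XP = o3*xF3 + k25*xF3*xXPP + k28*xF3*xXP)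
    (ex15 : k2*xE1Z + k6*xF1ZP = k1*xE1*xZ)
    (ex16 : k3*xE1Z + k5*xF1ZP + (k8+k9)*xZPY + (k11+k12)*xZPYP + i5 = k4*xF1*xZP + k7*xZP*xY + k10*xZP*xYP + o5*xZP)
    (ex17 : k8*xZPY + k18*xF2YP = k7*xZP*xY)
    (ex18 : k9*xZPY + k11*xZPYP + k15*xF2YPP + k17*xF2YP = k10*xZP*xYP + k16*xF2*xYP)
    (ex19 : k12*xZPYP + k14*xF2YPP + (k20+k21)*xYPPX + (k23+k24)*xYPPXP + i6 = k13*xF2*xYPP + k19*xYPP*xX + k22*xYPP*xXP + o6*xYPP)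
    (ex20 : k20*xYPPX + k30*xF3XP = k19*xYPP*xX)
    (ex21 : k21*xYPPX + k23*xYPPXP + k27*xF3XPP + k29*xF3XP = k22*xYPP*xXP + k28*xF3*xXP)
    (ex22 : k24*xYPPXP + k26*xF3XPP = k25*xF3*xXPP)
    (ey1 : k1*yE1*yZ = (k2+k3)*yE1Z)
    (ey2 : k4*yF1*yZP = (k5+k6)*yF1ZP)
    (ey3 : k7*yZP*yY = (k8+k9)*yZPY)
    (ey4 : k10*yZP*yYP = (k11+k12)*yZPYP)
    (ey5 : k13*yF2*yYPP = (k14+k15)*yF2YPP)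
    (ey6 : k16*yF2*yYP = (k17+k18)*yF2YP)
    (ey7 : k19*yYPP*yX = (k20+k21)*yYPPX)
    (ey8 : k22*yYPP*yXP = (k23+k24)*yYPPXP)
    (ey9 : k25*yF3*yXPP = (k26+k27)*yF3XPP)
    (ey10 : k28*yF3*yXP = (k29+k30)*yF3XP)
    (ey11 : i4 + k2*yE1Z + k3*yE1Z = o4*yE1 + k1*yE1*yZ)
    (ey12 : i1 + k5*yF1ZP + k6*yF1ZP = o1*yF1 + k4*yF1*yZP)
    (ey13 : i2 + (k14+k15)*yF2YPP + (k17+k18)*yF2YP = o2*yF2 + k13*yF2*yYPP + k16*yF2*yYP)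
    (ey14 : i3 + (k26+k27)*yF3XPP + (k29+k30)*yF3XP = o3*yF3 + k25*yF3*yXPP + k28*yF3*yXP)
    (ey15 : k2*yE1Z + k6*yF1ZP = k1*yE1*yZ)
    (ey16 : k3*yE1Z + k5*yF1ZP + (k8+k9)*yZPY + (k11+k12)*yZPYP + i5 = k4*yF1*yZP + k7*yZP*yY + k10*yZP*yYP + o5*yZP)
    (ey17 : k8*yZPY + k18*yF2YP = k7*yZP*yY)
    (ey18 : k9*yZPY + k11*yZPYP + k15*yF2YPP + k17*yF2YP = k10*yZP*yYP + k16*yF2*yYP)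
    (ey19 : k12*yZPYP + k14*yF2YPP + (k20+k21)*yYPPX + (k23+k24)*yYPPXP + i6 = k13*yF2*yYPP + k19*yYPP*yX + k22*yYPP*yXP + o6*yYPP)
    (ey20 : k20*yYPPX + k30*yF3XP = k19*yYPP*yX)
    (ey21 : k21*yYPPX + k23*yYPPXP + k27*yF3XPP + k29*yF3XP = k22*yYPP*yXP + k28*yF3*yXP)
    (ey22 : k24*yYPPXP + k26*yF3XPP = k25*yF3*yXPP)
    (hcons : (yX - xX) + (yXP - xXP) + (yXPP - xXPP) + (yYPPX - xYPPX) + (yYPPXP - xYPPXP) + (yF3XPP - xF3XPP) + (yF3XP - xF3XP) = 0) :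
    xE1 = yE1 ∧ xF1 = yF1 ∧ xF2 = yF2 ∧ xF3 = yF3 ∧ xZ = yZ ∧ xZP = yZP ∧ xY = yY ∧ xYP = yYP ∧ xYPP = yYPP ∧ xX = yX ∧ xXP = yXP ∧ xXPP = yXPP ∧ xE1Z = yE1Z ∧ xF1ZP = yF1ZP ∧ xZPY = yZPY ∧ xZPYP = yZPYP ∧ xF2YPP = yF2YPP ∧ xF2YP = yF2YP ∧ xYPPX = yYPPX ∧ xYPPXP = yYPPXP ∧ xF3XPP = yF3XPP ∧ xF3XP = yF3XP := by
  have hE1 : xE1 = yE1 := by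
    have hx : o4 * xE1 = i4 := by linear_combination -ex11 - ex1
    have hy : o4 * yE1 = i4 := by linear_combination -ey11 - ey1
    exact mul_left_cancel₀ (ne_of_gt ho4) (hx.trans hy.symm)
  have hF1 : xF1 = yF1 := by
    have hx : o1 * xF1 = i1 := by linear_combination -ex12 - ex2
    have hy : o1 * yF1 = i1 := by linear_combination -ey12 - ey2
    exact mul_left_cancel₀ (ne_of_gt ho1) (hx.trans hy.symm)
  have hF2 : xF2 = yF2 := by
    have hx : o2 * xF2 = i2 := by linear_combination -ex13 - ex5 - ex6
    have hy : o2 * yF2 = i2 := by linear_combination -ey13 - ey5 - ey6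
    exact mul_left_cancel₀ (ne_of_gt ho2) (hx.trans hy.symm)
  have hF3 : xF3 = yF3 := by
    have hx : o3 * xF3 = i3 := by linear_combination -ex14 - ex9 - ex10
    have hy : o3 * yF3 = i3 := by linear_combination -ey14 - ey9 - ey10
    exact mul_left_cancel₀ (ne_of_gt ho3) (hx.trans hy.symm)
  have hZP : xZP = yZP := by
    have hx : o5 * xZP = i5 := by linear_combination -ex16 - ex3 - ex4 - ex2 - ex15 - ex1
    have hy : o5 * yZP = i5 := by linear_combination -ey16 - ey3 - ey4 - ey2 - ey15 - ey1
    exact mul_left_cancel₀ (ne_of_gt ho5) (hx.trans hy.symm)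
  have hYPP : xYPP = yYPP := by
    have hx : o6 * xYPP = i6 := by
      linear_combination -ex19 - ex7 - ex8 - ex5 - ex18 - ex4 - ex6 - ex17 - ex3
    have hy : o6 * yYPP = i6 := by
      linear_combination -ey19 - ey7 - ey8 - ey5 - ey18 - ey4 - ey6 - ey17 - ey3
    exact mul_left_cancel₀ (ne_of_gt ho6) (hx.trans hy.symm)
  have hF1ZP : xF1ZP = yF1ZP := by
    have h : (k5+k6) * xF1ZP = (k5+k6) * yF1ZP := by
      linear_combination -ex2 + ey2 + (k4*xZP)*hF1 + (k4*yF1)*hZP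
    exact mul_left_cancel₀ (by positivity) h
  have hE1Z : xE1Z = yE1Z := by
    have hx : k3 * xE1Z = k6 * xF1ZP := by linear_combination -ex15 - ex1
    have hy : k3 * yE1Z = k6 * yF1ZP := by linear_combination -ey15 - ey1
    have h : k3 * xE1Z = k3 * yE1Z := by linear_combination hx - hy + k6*hF1ZP
    exact mul_left_cancel₀ (ne_of_gt hk3) h
  have hZ : xZ = yZ := by
    have h : k1*xE1*xZ = k1*xE1*yZ := by
      linear_combination ex1 - ey1 + (k2+k3)*hE1Z - (k1*yZ)*hE1
    exact mul_left_cancel₀ (by positivity) h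
  have hF2YPP : xF2YPP = yF2YPP := by
    have h : (k14+k15) * xF2YPP = (k14+k15) * yF2YPP := by
      linear_combination -ex5 + ey5 + (k13*xYPP)*hF2 + (k13*yF2)*hYPP
    exact mul_left_cancel₀ (by positivity) h
  have hZPYP : xZPYP = yZPYP := by
    have hx : k12 * xZPYP = k15 * xF2YPP := by
      linear_combination -ex18 - ex4 - ex6 - ex17 - ex3
    have hy : k12 * yZPYP = k15 * yF2YPP := by
      linear_combination -ey18 - ey4 - ey6 - ey17 - ey3
    have h : k12 * xZPYP = k12 * yZPYP := by linear_combination hx - hy + k15*hF2YPP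
    exact mul_left_cancel₀ (ne_of_gt hk12) h
  have hYP : xYP = yYP := by
    have h : k10*xZP*xYP = k10*xZP*yYP := by
      linear_combination ex4 - ey4 + (k11+k12)*hZPYP - (k10*yYP)*hZP
    exact mul_left_cancel₀ (by positivity) h
  have hF2YP : xF2YP = yF2YP := by
    have h : (k17+k18) * xF2YP = (k17+k18) * yF2YP := by
      linear_combination -ex6 + ey6 + (k16*xYP)*hF2 + (k16*yF2)*hYP
    exact mul_left_cancel₀ (by positivity) h
  have hZPY : xZPY = yZPY := by
    have hx : k9 * xZPY = k18 * xF2YP := by linear_combination -ex17 - ex3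
    have hy : k9 * yZPY = k18 * yF2YP := by linear_combination -ey17 - ey3
    have h : k9 * xZPY = k9 * yZPY := by linear_combination hx - hy + k18*hF2YP
    exact mul_left_cancel₀ (ne_of_gt hk9) h
  have hY : xY = yY := by
    have h : k7*xZP*xY = k7*xZP*yY := by
      linear_combination ex3 - ey3 + (k8+k9)*hZPY - (k7*yY)*hZP
    exact mul_left_cancel₀ (by positivity) h
  -- the X-chain
  set c1 : ℝ := k19*xYPP/(k20+k21) with hc1def
  set c2 : ℝ := k21*c1/k30 with hc2def
  set c3 : ℝ := (k29+k30)*c2/(k28*xF3) with hc3def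
  set c4 : ℝ := k22*xYPP*c3/(k23+k24) with hc4def
  set c5 : ℝ := k24*c4/k27 with hc5def
  set c6 : ℝ := (k26+k27)*c5/(k25*xF3) with hc6def
  have hc1pos : 0 < c1 := by rw [hc1def]; positivity
  have hc2pos : 0 < c2 := by rw [hc2def]; positivity
  have hc3pos : 0 < c3 := by rw [hc3def]; positivity
  have hc4pos : 0 < c4 := by rw [hc4def]; positivity
  have hc5pos : 0 < c5 := by rw [hc5def]; positivity
  have hc6pos : 0 < c6 := by rw [hc6def]; positivity
  have hc1x : xYPPX = c1 * xX := by
    rw [hc1def, div_mul_eq_mul_div, eq_div_iff (by positivity : (k20+k21) ≠ 0)]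
    linear_combination -ex7
  have hc1y : yYPPX = c1 * yX := by
    rw [hc1def, div_mul_eq_mul_div, eq_div_iff (by positivity : (k20+k21) ≠ 0)]
    linear_combination -ey7 - (k19*yX)*hYPP
  have hsx2 : k30 * xF3XP = k21 * xYPPX := by linear_combination ex20 + ex7
  have hsy2 : k30 * yF3XP = k21 * yYPPX := by linear_combination ey20 + ey7
  have hc2x : xF3XP = c2 * xX := by
    rw [hc2def, div_mul_eq_mul_div, eq_div_iff (ne_of_gt hk30)]
    linear_combination hsx2 + k21*hc1x
  have hc2y : yF3XP = c2 * yX := by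
    rw [hc2def, div_mul_eq_mul_div, eq_div_iff (ne_of_gt hk30)]
    linear_combination hsy2 + k21*hc1y
  have hc3x : xXP = c3 * xX := by
    rw [hc3def, div_mul_eq_mul_div, eq_div_iff (by positivity : k28*xF3 ≠ 0)]
    linear_combination ex10 + (k29+k30)*hc2x
  have hc3y : yXP = c3 * yX := by
    rw [hc3def, div_mul_eq_mul_div, eq_div_iff (by positivity : k28*xF3 ≠ 0)]
    linear_combination ey10 + (k29+k30)*hc2y + (k28*yXP)*hF3
  have hc4x : xYPPXP = c4 * xX := by
    rw [hc4def, div_mul_eq_mul_div, eq_div_iff (by positivity : (k23+k24) ≠ 0)]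
    linear_combination -ex8 + (k22*xYPP)*hc3x
  have hc4y : yYPPXP = c4 * yX := by
    rw [hc4def, div_mul_eq_mul_div, eq_div_iff (by positivity : (k23+k24) ≠ 0)]
    linear_combination -ey8 + (k22*yYPP)*hc3y - (k22*c3*yX)*hYPP
  have hsx5 : k27 * xF3XPP = k24 * xYPPXP := by linear_combination -ex22 - ex9
  have hsy5 : k27 * yF3XPP = k24 * yYPPXP := by linear_combination -ey22 - ey9
  have hc5x : xF3XPP = c5 * xX := by
    rw [hc5def, div_mul_eq_mul_div, eq_div_iff (ne_of_gt hk27)]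
    linear_combination hsx5 + k24*hc4x
  have hc5y : yF3XPP = c5 * yX := by
    rw [hc5def, div_mul_eq_mul_div, eq_div_iff (ne_of_gt hk27)]
    linear_combination hsy5 + k24*hc4y
  have hc6x : xXPP = c6 * xX := by
    rw [hc6def, div_mul_eq_mul_div, eq_div_iff (by positivity : k25*xF3 ≠ 0)]
    linear_combination ex9 + (k26+k27)*hc5x
  have hc6y : yXPP = c6 * yX := by
    rw [hc6def, div_mul_eq_mul_div, eq_div_iff (by positivity : k25*xF3 ≠ 0)]
    linear_combination ey9 + (k26+k27)*hc5y + (k25*yXPP)*hF3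
  have hfac : (1 + c1 + c2 + c3 + c4 + c5 + c6) * (yX - xX) = 0 := by
    linear_combination hcons + hc1x - hc1y + hc2x - hc2y + hc3x - hc3y + hc4x - hc4y
      + hc5x - hc5y + hc6x - hc6y
  have hX : xX = yX := by
    rcases mul_eq_zero.mp hfac with h | h
    · linarith
    · linarith
  have hXP : xXP = yXP := by rw [hc3x, hc3y, hX]
  have hXPP : xXPP = yXPP := by rw [hc6x, hc6y, hX]
  have hYPPX : xYPPX = yYPPX := by rw [hc1x, hc1y, hX]
  have hYPPXP : xYPPXP = yYPPXP := by rw [hc4x, hc4y, hX]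
  have hF3XPP : xF3XPP = yF3XPP := by rw [hc5x, hc5y, hX]
  have hF3XP : xF3XP = yF3XP := by rw [hc2x, hc2y, hX]
  exact ⟨hE1, hF1, hF2, hF3, hZ, hZP, hY, hYP, hYPP, hX, hXP, hXPP, hE1Z, hF1ZP,
    hZPY, hZPYP, hF2YPP, hF2YP, hYPPX, hYPPXP, hF3XPP, hF3XP⟩



set_option maxHeartbeats 4000000 in
/-- The semi-open MAPK cascade network with
`ℰ = {F₁, F₂, F₃, E₁, Z_P, Y_PP}` open is monostationary with mass action kinetics. -/
theorem MAPK_enzyme_open_monostationary :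
    monostationary (openOn MAPK {MSp.F1, MSp.F2, MSp.F3, MSp.E1, MSp.ZP, MSp.YPP}) := by
  intro κ hκ f hss hcomp hinj
  have hcv := MKaux.consvX (f 1 - f 0) (hcomp 0 1)
  rw [MKaux.sum_msp] at hcv
  simp only [Pi.sub_apply, MKaux.wX, one_mul, zero_mul, add_zero, zero_add] at hcv
  have gxE1 := MKaux.extract_eq κ (f 0) (hss 0).2 MSp.E1
  have gxF1 := MKaux.extract_eq κ (f 0) (hss 0).2 MSp.F1
  have gxF2 := MKaux.extract_eq κ (f 0) (hss 0).2 MSp.F2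
  have gxF3 := MKaux.extract_eq κ (f 0) (hss 0).2 MSp.F3
  have gxZ := MKaux.extract_eq κ (f 0) (hss 0).2 MSp.Z
  have gxZP := MKaux.extract_eq κ (f 0) (hss 0).2 MSp.ZP
  have gxY := MKaux.extract_eq κ (f 0) (hss 0).2 MSp.Y
  have gxYP := MKaux.extract_eq κ (f 0) (hss 0).2 MSp.YP
  have gxYPP := MKaux.extract_eq κ (f 0) (hss 0).2 MSp.YPP
  have gxX := MKaux.extract_eq κ (f 0) (hss 0).2 MSp.X
  have gxXP := MKaux.extract_eq κ (f 0) (hss 0).2 MSp.XP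
  have gxXPP := MKaux.extract_eq κ (f 0) (hss 0).2 MSp.XPP
  have gxE1Z := MKaux.extract_eq κ (f 0) (hss 0).2 MSp.E1Z
  have gxF1ZP := MKaux.extract_eq κ (f 0) (hss 0).2 MSp.F1ZP
  have gxZPY := MKaux.extract_eq κ (f 0) (hss 0).2 MSp.ZPY
  have gxZPYP := MKaux.extract_eq κ (f 0) (hss 0).2 MSp.ZPYP
  have gxF2YPP := MKaux.extract_eq κ (f 0) (hss 0).2 MSp.F2YPP
  have gxF2YP := MKaux.extract_eq κ (f 0) (hss 0).2 MSp.F2YP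
  have gxYPPX := MKaux.extract_eq κ (f 0) (hss 0).2 MSp.YPPX
  have gxYPPXP := MKaux.extract_eq κ (f 0) (hss 0).2 MSp.YPPXP
  have gxF3XPP := MKaux.extract_eq κ (f 0) (hss 0).2 MSp.F3XPP
  have gxF3XP := MKaux.extract_eq κ (f 0) (hss 0).2 MSp.F3XP
  have gyE1 := MKaux.extract_eq κ (f 1) (hss 1).2 MSp.E1
  have gyF1 := MKaux.extract_eq κ (f 1) (hss 1).2 MSp.F1
  have gyF2 := MKaux.extract_eq κ (f 1) (hss 1).2 MSp.F2
  have gyF3 := MKaux.extract_eq κ (f 1) (hss 1).2 MSp.F3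
  have gyZ := MKaux.extract_eq κ (f 1) (hss 1).2 MSp.Z
  have gyZP := MKaux.extract_eq κ (f 1) (hss 1).2 MSp.ZP
  have gyY := MKaux.extract_eq κ (f 1) (hss 1).2 MSp.Y
  have gyYP := MKaux.extract_eq κ (f 1) (hss 1).2 MSp.YP
  have gyYPP := MKaux.extract_eq κ (f 1) (hss 1).2 MSp.YPP
  have gyX := MKaux.extract_eq κ (f 1) (hss 1).2 MSp.X
  have gyXP := MKaux.extract_eq κ (f 1) (hss 1).2 MSp.XP
  have gyXPP := MKaux.extract_eq κ (f 1) (hss 1).2 MSp.XPP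
  have gyE1Z := MKaux.extract_eq κ (f 1) (hss 1).2 MSp.E1Z
  have gyF1ZP := MKaux.extract_eq κ (f 1) (hss 1).2 MSp.F1ZP
  have gyZPY := MKaux.extract_eq κ (f 1) (hss 1).2 MSp.ZPY
  have gyZPYP := MKaux.extract_eq κ (f 1) (hss 1).2 MSp.ZPYP
  have gyF2YPP := MKaux.extract_eq κ (f 1) (hss 1).2 MSp.F2YPP
  have gyF2YP := MKaux.extract_eq κ (f 1) (hss 1).2 MSp.F2YP
  have gyYPPX := MKaux.extract_eq κ (f 1) (hss 1).2 MSp.YPPX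
  have gyYPPXP := MKaux.extract_eq κ (f 1) (hss 1).2 MSp.YPPXP
  have gyF3XPP := MKaux.extract_eq κ (f 1) (hss 1).2 MSp.F3XPP
  have gyF3XP := MKaux.extract_eq κ (f 1) (hss 1).2 MSp.F3XP
  simp only [MKaux.RL, List.map_cons, List.map_nil, List.sum_cons, List.sum_nil, inflow,
    outflow, MKaux.prod_unit, MKaux.prod_pair, MKaux.prod_zeroC, reduceCtorEq,
    not_false_eq_true] at gxE1 gxF1 gxF2 gxF3 gxZ gxZP gxY gxYP gxYPP gxX gxXP gxXPP gxE1Z gxF1ZP gxZPY gxZPYP gxF2YPP gxF2YP gxYPPX gxYPPXP gxF3XPP gxF3XP gyE1 gyF1 gyF2 gyF3 gyZ gyZP gyY gyYP gyYPP gyX gyXP gyXPP gyE1Z gyF1ZP gyZPY gyZPYP gyF2YPP gyF2YP gyYPPX gyYPPXP gyF3XPP gyF3XP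
  simp only [unitC, pairC, reduceIte, reduceCtorEq, if_false, if_true, Nat.cast_ofNat,
    Nat.cast_zero, Nat.cast_one, mul_zero, mul_one, zero_sub, sub_zero, add_zero, zero_add,
    mul_neg, neg_neg, if_neg, sub_self] at gxE1 gxF1 gxF2 gxF3 gxZ gxZP gxY gxYP gxYPP gxX gxXP gxXPP gxE1Z gxF1ZP gxZPY gxZPYP gxF2YPP gxF2YP gxYPPX gxYPPXP gxF3XPP gxF3XP gyE1 gyF1 gyF2 gyF3 gyZ gyZP gyY gyYP gyYPP gyX gyXP gyXPP gyE1Z gyF1ZP gyZPY gyZPYP gyF2YPP gyF2YP gyYPPX gyYPPXP gyF3XPP gyF3XP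
  obtain ⟨hE1, hF1, hF2, hF3, hZ, hZP, hY, hYP, hYPP, hX, hXP, hXPP, hE1Z, hF1ZP,
      hZPY, hZPYP, hF2YPP, hF2YP, hYPPX, hYPPXP, hF3XPP, hF3XP⟩ :=
    MKaux.algebra_main (κ (pairC MSp.E1 MSp.Z, unitC MSp.E1Z)) (κ (unitC MSp.E1Z, pairC MSp.E1 MSp.Z)) (κ (unitC MSp.E1Z, pairC MSp.E1 MSp.ZP)) (κ (pairC MSp.F1 MSp.ZP, unitC MSp.F1ZP)) (κ (unitC MSp.F1ZP, pairC MSp.F1 MSp.ZP)) (κ (unitC MSp.F1ZP, pairC MSp.F1 MSp.Z)) (κ (pairC MSp.ZP MSp.Y, unitC MSp.ZPY)) (κ (unitC MSp.ZPY, pairC MSp.ZP MSp.Y)) (κ (unitC MSp.ZPY, pairC MSp.ZP MSp.YP)) (κ (pairC MSp.ZP MSp.YP, unitC MSp.ZPYP)) (κ (unitC MSp.ZPYP, pairC MSp.ZP MSp.YP)) (κ (unitC MSp.ZPYP, pairC MSp.ZP MSp.YPP)) (κ (pairC MSp.F2 MSp.YPP, unitC MSp.F2YPP)) (κ (unitC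 MSp.F2YPP, pairC MSp.F2 MSp.YPP)) (κ (unitC MSp.F2YPP, pairC MSp.F2 MSp.YP)) (κ (pairC MSp.F2 MSp.YP, unitC MSp.F2YP)) (κ (unitC MSp.F2YP, pairC MSp.F2 MSp.YP)) (κ (unitC MSp.F2YP, pairC MSp.F2 MSp.Y)) (κ (pairC MSp.YPP MSp.X, unitC MSp.YPPX)) (κ (unitC MSp.YPPX, pairC MSp.YPP MSp.X)) (κ (unitC MSp.YPPX, pairC MSp.YPP MSp.XP)) (κ (pairC MSp.YPP MSp.XP, unitC MSp.YPPXP)) (κ (unitC MSp.YPPXP, pairC MSp.YPP MSp.XP)) (κ (unitC MSp.YPPXP, pairC MSp.YPP MSp.XPP)) (κ (pairC MSp.F3 MSp.XPP, unitC MSp.F3XPP)) (κ (unitC MSp.F3XPP, pairC MSp.F3 MSp.XPP)) (κ (unitC MSp.F3XPP, pairC MSp.F3 MSp.XP)) (κ (pairC MSp.F3 MSp.XP, unitC MSp.F3XP)) (κ (unitC MSp.F3XP, pairC MSp.F3 MSp.XP)) (κ (unitC MSp.F3XP, pairC MSp.F3 MSp.X)) (κ ((fun _ => 0, unitC MSp.F1)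 : Reaction MSp)) (κ ((fun _ => 0, unitC MSp.F2) : Reaction MSp)) (κ ((fun _ => 0, unitC MSp.F3) : Reaction MSp)) (κ ((fun _ => 0, unitC MSp.E1) : Reaction MSp)) (κ ((fun _ => 0, unitC MSp.ZP) : Reaction MSp)) (κ ((fun _ => 0, unitC MSp.YPP) : Reaction MSp)) (κ ((unitC MSp.F1, fun _ => 0) : Reaction MSp)) (κ ((unitC MSp.F2, fun _ => 0) : Reaction MSp)) (κ ((unitC MSp.F3, fun _ => 0) : Reaction MSp)) (κ ((unitC MSp.E1, fun _ => 0) : Reaction MSp)) (κ ((unitC MSp.ZP, fun _ => 0) : Reaction MSp)) (κ ((unitC MSp.YPP, fun _ => 0) : Reaction MSp))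
      (f 0 MSp.E1) (f 0 MSp.F1) (f 0 MSp.F2) (f 0 MSp.F3) (f 0 MSp.Z) (f 0 MSp.ZP) (f 0 MSp.Y) (f 0 MSp.YP) (f 0 MSp.YPP) (f 0 MSp.X) (f 0 MSp.XP) (f 0 MSp.XPP) (f 0 MSp.E1Z) (f 0 MSp.F1ZP) (f 0 MSp.ZPY) (f 0 MSp.ZPYP) (f 0 MSp.F2YPP) (f 0 MSp.F2YP) (f 0 MSp.YPPX) (f 0 MSp.YPPXP) (f 0 MSp.F3XPP) (f 0 MSp.F3XP) (f 1 MSp.E1) (f 1 MSp.F1) (f 1 MSp.F2) (f 1 MSp.F3) (f 1 MSp.Z) (f 1 MSp.ZP) (f 1 MSp.Y) (f 1 MSp.YP) (f 1 MSp.YPP) (f 1 MSp.X) (f 1 MSp.XP) (f 1 MSp.XPP) (f 1 MSp.E1Z) (f 1 MSp.F1ZP) (f 1 MSp.ZPY) (f 1 MSp.ZPYP) (f 1 MSp.F2YPP) (f 1 MSp.F2YP) (f 1 MSp.YPPX) (f 1 MSp.YPPXP) (f 1 MSp.F3XPP) (f 1 MSp.F3XP)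
      (hκ _ (by rw [MKaux.hR]; decide)) (hκ _ (by rw [MKaux.hR]; decide)) (hκ _ (by rw [MKaux.hR]; decide)) (hκ _ (by rw [MKaux.hR]; decide)) (hκ _ (by rw [MKaux.hR]; decide)) (hκ _ (by rw [MKaux.hR]; decide)) (hκ _ (by rw [MKaux.hR]; decide)) (hκ _ (by rw [MKaux.hR]; decide)) (hκ _ (by rw [MKaux.hR]; decide)) (hκ _ (by rw [MKaux.hR]; decide)) (hκ _ (by rw [MKaux.hR]; decide)) (hκ _ (by rw [MKaux.hR]; decide)) (hκ _ (by rw [MKaux.hR]; decide)) (hκ _ (by rw [MKaux.hR]; decide)) (hκ _ (by rw [MKaux.hR]; decide)) (hκ _ (by rw [MKaux.hR]; decide)) (hκ _ (by rw [MKaux.hR]; decide)) (hκ _ (by rw [MKaux.hR]; decide)) (hκ _ (by rw [MKaux.hR]; decide)) (hκ _ (by rw [MKaux.hR]; decide)) (hκ _ (by rw [MKaux.hR]; decide)) (hκ _ (by rw [MKaux.hR]; decide)) (hκ _ (by rw [MKaux.hR]; decide)) (hκ _ (by rw [MKaux.hR]; decide)) (hκ _ (by rw [MKaux.hR]; decide))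 (hκ _ (by rw [MKaux.hR]; decide)) (hκ _ (by rw [MKaux.hR]; decide)) (hκ _ (by rw [MKaux.hR]; decide)) (hκ _ (by rw [MKaux.hR]; decide)) (hκ _ (by rw [MKaux.hR]; decide)) (hκ _ (by rw [MKaux.hR]; decide)) (hκ _ (by rw [MKaux.hR]; decide)) (hκ _ (by rw [MKaux.hR]; decide)) (hκ _ (by rw [MKaux.hR]; decide)) (hκ _ (by rw [MKaux.hR]; decide)) (hκ _ (by rw [MKaux.hR]; decide)) (hκ _ (by rw [MKaux.hR]; decide)) (hκ _ (by rw [MKaux.hR]; decide)) (hκ _ (by rw [MKaux.hR]; decide)) (hκ _ (by rw [MKaux.hR]; decide)) (hκ _ (by rw [MKaux.hR]; decide)) (hκ _ (by rw [MKaux.hR]; decide))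
      ((hss 0).1 MSp.E1) ((hss 0).1 MSp.ZP) ((hss 0).1 MSp.YPP) ((hss 0).1 MSp.F3)
      (by linear_combination gxE1Z) (by linear_combination gxF1ZP) (by linear_combination gxZPY) (by linear_combination gxZPYP) (by linear_combination gxF2YPP) (by linear_combination gxF2YP) (by linear_combination gxYPPX) (by linear_combination gxYPPXP) (by linear_combination gxF3XPP) (by linear_combination gxF3XP) (by linear_combination gxE1) (by linear_combination gxF1) (by linear_combination gxF2) (by linear_combination gxF3) (by linear_combination gxZ) (by linear_combination gxZP) (by linear_combination gxY) (by linear_combination gxYP) (by linear_combination gxYPP) (by linear_combination gxX) (by linear_combination gxXP) (by linear_combination gxXPP)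
      (by linear_combination gyE1Z) (by linear_combination gyF1ZP) (by linear_combination gyZPY) (by linear_combination gyZPYP) (by linear_combination gyF2YPP) (by linear_combination gyF2YP) (by linear_combination gyYPPX) (by linear_combination gyYPPXP) (by linear_combination gyF3XPP) (by linear_combination gyF3XP) (by linear_combination gyE1) (by linear_combination gyF1) (by linear_combination gyF2) (by linear_combination gyF3) (by linear_combination gyZ) (by linear_combination gyZP) (by linear_combination gyY) (by linear_combination gyYP) (by linear_combination gyYPP) (by linear_combination gyX) (by linear_combination gyXP) (by linear_combination gyXPP)
      (by linear_combination hcv)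
  have hfeq : f 0 = f 1 := by
    funext s
    cases s <;> assumption
  exact absurd (hinj hfeq) (by decide)
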